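/- arXiv:1006.5928 — 4 statements merged into one kernel-verified Lean document; each statement's English description precedes it below -/
import Mathlib

section
/- For polytopes P and Q and any ℓ ∈ ℕ, the ℓ-flag polynomial of the Cartesian product satisfies f̃^ℓ_{P×Q}(x_1,…,x_ℓ) = f̃^ℓ_P(x_1,…,x_ℓ) · f̃^ℓ_Q(x_1,…,x_ℓ). -/
/-!
A chain of faces of `P × Q` is exactly a pair of chains, one in `P` and one in `Q`, so the
sum over chains of `P × Q` splits as a product of sums. The monomial of a pair of chains is
the product of the two monomials because dimensions add and, being monotone along a chain,
their successive (truncated) differences add as well.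
-/

open Classical in
/-- The `ℓ`-flag polynomial of a finite "face poset" `F` (faces ordered by `le`,
with dimension function `dim`): the sum over `ℓ`-chains `A₁ ≤ ⋯ ≤ A_ℓ` of faces of
the monomial `x₁^{dim A₁} x₂^{dim A₂ − dim A₁} ⋯ x_ℓ^{dim A_ℓ − dim A_{ℓ−1}}`. -/
noncomputable def flagPoly (F : Type) [Fintype F] (le : F → F → Prop) (dim : F → ℕ)
    (ℓ : ℕ) : MvPolynomial (Fin ℓ) ℤ :=
  ∑ A ∈ Finset.univ.filter (fun A : Fin ℓ → F => ∀ i j : Fin ℓ, i ≤ j → le (A i) (A j)),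
    ∏ i : Fin ℓ,
      (MvPolynomial.X i : MvPolynomial (Fin ℓ) ℤ) ^
        (dim (A i) -
          (if i.val = 0 then 0
           else dim (A ⟨i.val - 1, Nat.lt_of_le_of_lt (Nat.sub_le _ _) i.isLt⟩)))

namespace FlagPoly

variable {ℓ : ℕ}

def flagExponent (d : Fin ℓ → ℕ) (i : Fin ℓ) : ℕ :=
  d i - if i.val = 0 then 0 else d ⟨i.val - 1, Nat.lt_of_le_of_lt (Nat.sub_le _ _) i.isLt⟩

theorem flagExponent_add {d e : Fin ℓ → ℕ} (hd : Monotone d) (he : Monotone e) (i : Fin ℓ) :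
    flagExponent (d + e) i = flagExponent d i + flagExponent e i := by
  unfold flagExponent
  split_ifs
  · simp
  · have hprev : (⟨i.val - 1, by omega⟩ : Fin ℓ) ≤ i := Fin.mk_le_of_le_val (Nat.sub_le _ _)
    have hd_prev := hd hprev
    have he_prev := he hprev
    simp only [Pi.add_apply]
    omega

section Chains

variable {F : Type} [Fintype F]

open Classical in
noncomputable def chains (le : F → F → Prop) (ℓ : ℕ) : Finset (Fin ℓ → F) :=
  Finset.univ.filter fun A : Fin ℓ → F => ∀ i j : Fin ℓ, i ≤ j → le (A i) (A j)

theorem mem_chains {le : F → F → Prop} {A : Fin ℓ → F} :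
    A ∈ chains le ℓ ↔ ∀ i j : Fin ℓ, i ≤ j → le (A i) (A j) := by
  simp [chains]

theorem flagPoly_eq_sum_chains (le : F → F → Prop) (dim : F → ℕ) (ℓ : ℕ) :
    flagPoly F le dim ℓ =
      ∑ A ∈ chains le ℓ, ∏ i, (MvPolynomial.X i) ^ flagExponent (dim ∘ A) i :=
  rfl

theorem monotone_comp_of_mem_chains {le : F → F → Prop} {dim : F → ℕ}
    (hdim : ∀ a b, le a b → dim a ≤ dim b) {A : Fin ℓ → F} (hA : A ∈ chains le ℓ) :
    Monotone (dim ∘ A) :=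
  fun i j hij => hdim _ _ (mem_chains.1 hA i j hij)

end Chains

theorem mem_chains_prod {P Q : Type} [Fintype P] [Fintype Q] {leP : P → P → Prop}
    {leQ : Q → Q → Prop} {A : Fin ℓ → P × Q} :
    A ∈ chains (fun x y => leP x.1 y.1 ∧ leQ x.2 y.2) ℓ ↔
      (fun i => (A i).1) ∈ chains leP ℓ ∧ (fun i => (A i).2) ∈ chains leQ ℓ := by
  simp only [mem_chains]
  exact ⟨fun h => ⟨fun i j hij => (h i j hij).1, fun i j hij => (h i j hij).2⟩,
    fun h i j hij => ⟨h.1 i j hij, h.2 i j hij⟩⟩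

end FlagPoly

open FlagPoly

/-- Flag polynomials are multiplicative over Cartesian products: faces of `P × Q`
are pairs of faces ordered componentwise, with dimension the sum of dimensions. -/
theorem stmt3 (P Q : Type) [Fintype P] [Fintype Q]
    (leP : P → P → Prop) (leQ : Q → Q → Prop) (dimP : P → ℕ) (dimQ : Q → ℕ)
    (hP : ∀ a b, leP a b → dimP a ≤ dimP b) (hQ : ∀ a b, leQ a b → dimQ a ≤ dimQ b)
    (ℓ : ℕ) :
    flagPoly (P × Q) (fun x y => leP x.1 y.1 ∧ leQ x.2 y.2)
      (fun x => dimP x.1 + dimQ x.2) ℓ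
    = flagPoly P leP dimP ℓ * flagPoly Q leQ dimQ ℓ := by
  rw [flagPoly_eq_sum_chains, flagPoly_eq_sum_chains, flagPoly_eq_sum_chains,
    Finset.sum_mul_sum, ← Finset.sum_product']
  refine Finset.sum_equiv (Equiv.arrowProdEquivProdArrow _ _ _)
    (fun A => by simp [mem_chains_prod]) fun A hA => ?_
  obtain ⟨hA₁, hA₂⟩ := mem_chains_prod.1 hA
  rw [← Finset.prod_mul_distrib]
  refine Finset.prod_congr rfl fun i _ => ?_
  rw [← pow_add]
  exact congrArg _ (flagExponent_add (monotone_comp_of_mem_chains hP hA₁)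
    (monotone_comp_of_mem_chains hQ hA₂) i)
end

section
/- Let F_1, F_2 ⊆ [r] with F_1 ∪ F_2 = [r], and set r_1 = |F_1 ∩ F_2|, r_2 = |F_1 \ F_2|, r_3 = |F_2 \ F_1|. Then the number of vertices of the Minkowski sum P = Δ_{F_1} + Δ_{F_2} is r_1 r_2 + r_1 r_3 + r_2 r_3 + r_1. -/
/-! Every point of `Δ_{F₁} + Δ_{F₂}` is a convex combination of the sums `e_a + e_b` with
`(a, b) ∈ F₁ × F₂`, so the vertices are among these sums. If `a ≠ b` both lie in `F₁ ∩ F₂`, then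
`e_a + e_b` is the midpoint of `2 e_a` and `2 e_b`, hence not a vertex. Every other pair `(i, j)`
gives a vertex: if `i = j` or `i ∉ F₂`, the functional `2 x_i + x_j` is maximised on the sums
uniquely at `e_i + e_j`, and the case `j ∉ F₁` is symmetric. Since `e_a + e_b` determines
`{a, b}`, the vertices are counted by `F₁ × F₂` minus the off-diagonal of `F₁ ∩ F₂`, i.e. by
`(r₁ + r₂)(r₁ + r₃) - (r₁² - r₁)`. -/

open Pointwise Finset

section LinearFunctional

variable {E : Type*} [AddCommGroup E] [Module ℝ E] {S : Set E} {v : E}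

lemma eq_or_lt_of_mem_convexHull_of_forall_lt (ℓ : E →ₗ[ℝ] ℝ)
    (hlt : ∀ w ∈ S, w ≠ v → ℓ w < ℓ v) {x : E} (hx : x ∈ convexHull ℝ S) :
    x = v ∨ ℓ x < ℓ v := by
  have hrest : ∀ y ∈ convexHull ℝ (S \ {v}), ℓ y < ℓ v :=
    convexHull_min (fun w hw => hlt w hw.1 hw.2) (convex_halfSpace_lt ℓ.isLinear _)
  replace hx := convexHull_mono (Set.subset_insert_sdiff_singleton v S) hx
  rcases (S \ {v}).eq_empty_or_nonempty with hempty | hne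
  · left
    simpa [hempty] using hx
  rw [convexHull_insert hne] at hx
  obtain ⟨_, rfl, y, hy, a, b, -, hb, hab, rfl⟩ := mem_convexJoin.mp hx
  rcases hb.eq_or_lt with rfl | hb
  · simp [show a = 1 by linarith]
  · right
    have hby := mul_lt_mul_of_pos_left (hrest y hy) hb
    simp only [map_add, map_smul, smul_eq_mul]
    linear_combination hby + ℓ _ * hab

lemma mem_extremePoints_convexHull_of_forall_lt (ℓ : E →ₗ[ℝ] ℝ) (hv : v ∈ S)
    (hlt : ∀ w ∈ S, w ≠ v → ℓ w < ℓ v) : v ∈ (convexHull ℝ S).extremePoints ℝ := by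
  have hsdiff : convexHull ℝ S \ {v} = convexHull ℝ S ∩ {w | ℓ w < ℓ v} := by
    ext x
    refine ⟨fun ⟨hx, hxv⟩ => ⟨hx, ?_⟩, fun ⟨hx, hxv⟩ => ⟨hx, ?_⟩⟩
    · exact (eq_or_lt_of_mem_convexHull_of_forall_lt ℓ hlt hx).resolve_left hxv
    · rintro rfl
      exact lt_irrefl _ (Set.mem_ofPred.mp hxv)
  rw [(convex_convexHull ℝ S).mem_extremePoints_iff_convex_sdiff, hsdiff]
  exact ⟨subset_convexHull ℝ S hv,
    (convex_convexHull ℝ S).inter (convex_halfSpace_lt ℓ.isLinear _)⟩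

end LinearFunctional

section SimplexSum

variable {ι : Type*} [DecidableEq ι]

lemma Pi.single_one_add_single_one_eq_iff {R : Type*} [AddCommMonoidWithOne R] [CharZero R]
    {i j k l : ι} :
    (Pi.single i 1 : ι → R) + Pi.single j 1 = Pi.single k 1 + Pi.single l 1 ↔
      i = k ∧ j = l ∨ i = l ∧ j = k := by
  rw [Pi.single_add_single_eq_single_add_single one_ne_zero one_ne_zero]
  simp [one_add_one_eq_two]

lemma mem_add_image_single_iff {R : Type*} [AddCommMonoidWithOne R] {F1 F2 : Finset ι}
    {w : ι → R} :
    w ∈ (fun i => Pi.single i 1 : ι → ι → R) '' F1 + (fun i => Pi.single i 1) '' F2 ↔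
      ∃ a ∈ F1, ∃ b ∈ F2, Pi.single a 1 + Pi.single b 1 = w := by
  simp [Set.mem_add]

def simplexSumVertexPairs (F1 F2 : Finset ι) : Finset (ι × ι) :=
  F1 ×ˢ F2 \ (F1 ∩ F2).offDiag

-- The functional takes the value `2[a = i] + [a = j] + 2[b = i] + [b = j]` on `e_a + e_b`.
lemma single_add_single_lt_of_ne {i j a b : ι} (hb : i = j ∨ b ≠ i) (hne : (a, b) ≠ (i, j)) :
    (2 • LinearMap.proj i + LinearMap.proj j : (ι → ℝ) →ₗ[ℝ] ℝ) (Pi.single a 1 + Pi.single b 1) <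
      (2 • LinearMap.proj i + LinearMap.proj j : (ι → ℝ) →ₗ[ℝ] ℝ)
        (Pi.single i 1 + Pi.single j 1) := by
  simp only [LinearMap.add_apply, LinearMap.smul_apply, LinearMap.proj_apply, Pi.add_apply,
    Pi.single_apply, ne_eq, Prod.mk.injEq] at hb hne ⊢
  split_ifs <;> grind

lemma single_add_single_mem_extremePoints {F1 F2 : Finset ι} {i j : ι} (hi : i ∈ F1)
    (hj : j ∈ F2) (hij : i = j ∨ i ∉ F2) :
    Pi.single i 1 + Pi.single j 1 ∈ (convexHull ℝ ((fun i => Pi.single i 1 : ι → ι → ℝ) '' F1 +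
      (fun i => Pi.single i 1) '' F2)).extremePoints ℝ := by
  refine mem_extremePoints_convexHull_of_forall_lt (2 • LinearMap.proj i + LinearMap.proj j)
    (mem_add_image_single_iff.mpr ⟨i, hi, j, hj, rfl⟩) ?_
  rintro _ hw hne
  obtain ⟨a, -, b, hb, rfl⟩ := mem_add_image_single_iff.mp hw
  refine single_add_single_lt_of_ne (hij.imp_right fun hi2 hbi => hi2 (hbi ▸ hb)) ?_
  rintro ⟨rfl, rfl⟩
  exact hne rfl

theorem extremePoints_convexHull_add_image_single (F1 F2 : Finset ι) :
    (convexHull ℝ ((fun i => Pi.single i 1 : ι → ι → ℝ) '' F1 +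
      (fun i => Pi.single i 1) '' F2)).extremePoints ℝ =
      (fun p : ι × ι => (Pi.single p.1 1 + Pi.single p.2 1 : ι → ℝ)) ''
        simplexSumVertexPairs F1 F2 := by
  ext x
  constructor
  · intro hx
    obtain ⟨a, ha, b, hb, rfl⟩ := mem_add_image_single_iff.mp (extremePoints_convexHull_subset hx)
    refine ⟨(a, b), ?_, rfl⟩
    rw [mem_coe, simplexSumVertexPairs, mem_sdiff, mem_product, mem_offDiag]
    refine ⟨⟨ha, hb⟩, fun ⟨ha', hb', hab⟩ => hab ?_⟩
    have hmid : (Pi.single a 1 + Pi.single b 1 : ι → ℝ) ∈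
        openSegment ℝ (Pi.single a 1 + Pi.single a 1) (Pi.single b 1 + Pi.single b 1) :=
      ⟨1 / 2, 1 / 2, by norm_num, by norm_num, by norm_num, by module⟩
    have hend := hx.2
      (subset_convexHull ℝ _ (mem_add_image_single_iff.mpr ⟨a, ha, a, (mem_inter.mp ha').2, rfl⟩))
      (subset_convexHull ℝ _ (mem_add_image_single_iff.mpr ⟨b, (mem_inter.mp hb').1, b, hb, rfl⟩))
      hmid
    rcases Pi.single_one_add_single_one_eq_iff.mp hend with ⟨-, h⟩ | ⟨h, -⟩ <;> exact h
  · rintro ⟨⟨i, j⟩, hij, rfl⟩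
    simp only [mem_coe, simplexSumVertexPairs, mem_sdiff, mem_product, mem_offDiag, mem_inter,
      not_and, not_not] at hij
    obtain ⟨⟨hi, hj⟩, hdiag⟩ := hij
    dsimp only
    by_cases hji : j ∈ F1 ∧ i ∈ F2
    · exact single_add_single_mem_extremePoints hi hj (.inl (hdiag ⟨hi, hji.2⟩ ⟨hji.1, hj⟩))
    rcases not_and_or.mp hji with hj1 | hi2
    · rw [add_comm (Pi.single i _), add_comm (_ '' _)]
      exact single_add_single_mem_extremePoints hj hi (.inr hj1)
    · exact single_add_single_mem_extremePoints hi hj (.inr hi2)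

lemma injOn_simplexSumVertexPairs (F1 F2 : Finset ι) :
    Set.InjOn (fun p : ι × ι => (Pi.single p.1 1 + Pi.single p.2 1 : ι → ℝ))
      (simplexSumVertexPairs F1 F2) := by
  rintro ⟨a, b⟩ hab ⟨c, d⟩ hcd h
  simp only [mem_coe, simplexSumVertexPairs, mem_sdiff, mem_product, mem_offDiag, mem_inter,
    not_and, not_not] at hab hcd
  rcases Pi.single_one_add_single_one_eq_iff.mp h with ⟨rfl, rfl⟩ | ⟨rfl, rfl⟩
  · rfl
  · rw [hab.2 ⟨hab.1.1, hcd.1.2⟩ ⟨hcd.1.1, hab.1.2⟩]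

lemma card_simplexSumVertexPairs (F1 F2 : Finset ι) :
    #(simplexSumVertexPairs F1 F2) = #(F1 ∩ F2) * #(F1 \ F2) + #(F1 ∩ F2) * #(F2 \ F1) +
      #(F1 \ F2) * #(F2 \ F1) + #(F1 ∩ F2) := by
  have hsub : (F1 ∩ F2).offDiag ⊆ F1 ×ˢ F2 := fun p hp => by
    simp only [mem_offDiag, mem_inter] at hp
    exact mem_product.mpr ⟨hp.1.1, hp.2.1.2⟩
  have hpairs := card_sdiff_add_card_eq_card hsub
  have hoff : #(F1 ∩ F2).offDiag + #(F1 ∩ F2) = #(F1 ∩ F2) * #(F1 ∩ F2) := by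
    rw [offDiag_card, Nat.sub_add_cancel (Nat.le_mul_self _)]
  have hF1 := card_inter_add_card_sdiff F1 F2
  have hF2 := card_inter_add_card_sdiff F2 F1
  rw [inter_comm] at hF2
  rw [card_product, ← hF1, ← hF2] at hpairs
  rw [simplexSumVertexPairs]
  linarith

end SimplexSum

theorem stmt7_general (r : ℕ) (F1 F2 : Finset (Fin r)) :
    (Set.extremePoints ℝ
        (convexHull ℝ ((fun i : Fin r => fun j : Fin r => if i = j then (1 : ℝ) else 0) '' ↑F1) +
         convexHull ℝ ((fun i : Fin r => fun j : Fin r => if i = j then (1 : ℝ) else 0) '' ↑F2))).ncard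
    = (F1 ∩ F2).card * (F1 \ F2).card + (F1 ∩ F2).card * (F2 \ F1).card +
        (F1 \ F2).card * (F2 \ F1).card + (F1 ∩ F2).card := by
  have hsingle : (fun i : Fin r => fun j : Fin r => if i = j then (1 : ℝ) else 0) =
      fun i => Pi.single i 1 := by
    funext i j
    simp [Pi.single_apply, eq_comm]
  rw [hsingle, ← convexHull_add, extremePoints_convexHull_add_image_single,
    (injOn_simplexSumVertexPairs F1 F2).ncard_image, Set.ncard_coe_finset,
    card_simplexSumVertexPairs]

/-- For `F₁, F₂ ⊆ [r]` with `F₁ ∪ F₂ = [r]`, the number of vertices (extreme points)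
of the Minkowski sum `Δ_{F₁} + Δ_{F₂}` is `r₁r₂ + r₁r₃ + r₂r₃ + r₁`, where
`r₁ = |F₁ ∩ F₂|`, `r₂ = |F₁ \ F₂|`, `r₃ = |F₂ \ F₁|`. -/
theorem stmt7 (r : ℕ) (F1 F2 : Finset (Fin r)) (hcover : F1 ∪ F2 = Finset.univ) :
    (Set.extremePoints ℝ
        (convexHull ℝ ((fun i : Fin r => fun j : Fin r => if i = j then (1 : ℝ) else 0) '' ↑F1) +
         convexHull ℝ ((fun i : Fin r => fun j : Fin r => if i = j then (1 : ℝ) else 0) '' ↑F2))).ncard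
    = (F1 ∩ F2).card * (F1 \ F2).card + (F1 ∩ F2).card * (F2 \ F1).card +
        (F1 \ F2).card * (F2 \ F1).card + (F1 ∩ F2).card :=
  stmt7_general r F1 F2
end

section
/- For integers r ≥ 1 and 0 ≤ d ≤ r−1, the maximum over all triples (r_1, r_2, r_3) of nonnegative integers with r_1 + r_2 + r_3 = r of the quantity C(r+1, d+2) + C(r, d+2) − C(r_1+r_2, d+2) − C(r_1+r_3, d+2) − C(r_2+r_3+1, d+2) equals C(r+1, d+2) + C(r, d+2) − C(⌊(2r+1)/3⌋, d+2) − C([(2r+1)/3], d+2) − C(⌈(2r+1)/3⌉, d+2), where [x] denotes the nearest integer to x. -/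
/-!
The sequence `n ↦ C(n, d+2)` is discrete-convex: its forward difference `C(n, d+1)` is monotone.
So it lies above each of its tangent lines `f q + (x - q) Δf(q)`. Taking `q = ⌊N/3⌋` and adding
the tangent inequalities at `a, b, c` with `a + b + c = N` gives
`f a + f b + f c ≥ 3 f q + (N - 3q) Δf(q)`, and the right-hand side is exactly the value of
`f` summed over the balanced decomposition of `N`. With `N = 2r+1` the balanced decomposition is
realized by some `r₁ + r₂ + r₃ = r`.
-/

open fwdDiff

section ConvexSequence

variable {f : ℕ → ℤ} (hf : Monotone (Δ_[1] f))
include hf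

lemma add_mul_fwdDiff_le_add (q n : ℕ) : f q + n * Δ_[1] f q ≤ f (q + n) := by
  induction n with
  | zero => simp
  | succ n ih =>
    have hstep : f (q + (n + 1)) = f (q + n) + Δ_[1] f (q + n) := by
      simp only [fwdDiff, ← add_assoc]; ring
    have hmono : Δ_[1] f q ≤ Δ_[1] f (q + n) := hf (Nat.le_add_right q n)
    rw [hstep]; push_cast; linarith

lemma add_le_add_mul_fwdDiff (x n : ℕ) : f (x + n) ≤ f x + n * Δ_[1] f (x + n) := by
  induction n with
  | zero => simp
  | succ n ih =>
    have hstep : f (x + (n + 1)) = f (x + n) + Δ_[1] f (x + n) := by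
      simp only [fwdDiff, ← add_assoc]; ring
    have hmono : Δ_[1] f (x + n) ≤ Δ_[1] f (x + (n + 1)) := hf (by omega)
    have hscaled := mul_le_mul_of_nonneg_left hmono (by positivity : (0 : ℤ) ≤ n + 1)
    rw [hstep]; push_cast; linarith

lemma tangent_le_of_monotone_fwdDiff (q x : ℕ) : f q + ((x : ℤ) - q) * Δ_[1] f q ≤ f x := by
  rcases le_total q x with hqx | hxq
  · obtain ⟨n, rfl⟩ := Nat.exists_eq_add_of_le hqx
    have := add_mul_fwdDiff_le_add hf q n
    push_cast; linarith
  · obtain ⟨n, rfl⟩ := Nat.exists_eq_add_of_le hxq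
    have := add_le_add_mul_fwdDiff hf x n
    push_cast; linarith

lemma balanced_sum_le_of_monotone_fwdDiff {a b c N : ℕ} (h : a + b + c = N) :
    f (N / 3) + f ((N + 1) / 3) + f ((N + 2) / 3) ≤ f a + f b + f c := by
  set q := N / 3
  have hbalanced :
      f q + f ((N + 1) / 3) + f ((N + 2) / 3) = 3 * f q + (N % 3 : ℕ) * Δ_[1] f q := by
    have hsucc : f (q + 1) = f q + Δ_[1] f q := by simp only [fwdDiff]; ring
    rcases (by omega : N % 3 = 0 ∨ N % 3 = 1 ∨ N % 3 = 2) with h3 | h3 | h3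
    · rw [show (N + 1) / 3 = q by omega, show (N + 2) / 3 = q by omega, h3]; ring
    · rw [show (N + 1) / 3 = q by omega, show (N + 2) / 3 = q + 1 by omega, h3, hsucc]; ring
    · rw [show (N + 1) / 3 = q + 1 by omega, show (N + 2) / 3 = q + 1 by omega, h3, hsucc]; ring
  have hexcess : ((a : ℤ) - q) + (b - q) + (c - q) = (N % 3 : ℕ) := by push_cast; omega
  have ha := tangent_le_of_monotone_fwdDiff hf q a
  have hb := tangent_le_of_monotone_fwdDiff hf q b
  have hc := tangent_le_of_monotone_fwdDiff hf q c
  calc f q + f ((N + 1) / 3) + f ((N + 2) / 3)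
      = (f q + (a - q) * Δ_[1] f q) + (f q + (b - q) * Δ_[1] f q) +
          (f q + (c - q) * Δ_[1] f q) := by rw [hbalanced, ← hexcess]; ring
    _ ≤ f a + f b + f c := by linarith

end ConvexSequence

lemma monotone_fwdDiff_choose (k : ℕ) :
    Monotone (Δ_[1] (fun n ↦ n.choose (k + 1) : ℕ → ℤ)) := by
  rw [fwdDiff_choose]
  intro m n hmn
  exact Int.ofNat_le.mpr (Nat.choose_le_choose k hmn)

lemma toNat_round_div_three (N : ℕ) : (round ((N : ℚ) / 3)).toNat = (N + 1) / 3 := by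
  obtain ⟨m, s, hs, hNm⟩ : ∃ m s, s ≤ 2 ∧ N + 1 = 3 * m + s :=
    ⟨(N + 1) / 3, (N + 1) % 3, by omega, by omega⟩
  have hround : round ((N : ℚ) / 3) = m := by
    have hNm' : (N + 1 : ℚ) = 3 * m + s := by exact_mod_cast hNm
    have hs' : (s : ℚ) ≤ 2 := by exact_mod_cast hs
    rw [round_eq, Int.floor_eq_iff]
    push_cast
    constructor <;> linarith
  rw [hround, Int.toNat_natCast]
  omega

lemma exists_pairwise_sums_balanced (r : ℕ) : ∃ r1 r2 r3 : ℕ, r1 + r2 + r3 = r ∧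
    r1 + r2 = (2 * r + 1) / 3 ∧ r1 + r3 = (2 * r + 1 + 1) / 3 ∧
      r2 + r3 + 1 = (2 * r + 1 + 2) / 3 := by
  obtain ⟨k, hk | hk | hk⟩ : ∃ k, r = 3 * k ∨ r = 3 * k + 1 ∨ r = 3 * k + 2 :=
    ⟨r / 3, by omega⟩
  · exact ⟨k, k, k, by omega⟩
  · exact ⟨k + 1, k, k, by omega⟩
  · exact ⟨k + 1, k, k + 1, by omega⟩

theorem stmt9_general (r d : ℕ) :
    IsGreatest
      {n : ℤ | ∃ r1 r2 r3 : ℕ, r1 + r2 + r3 = r ∧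
        n = ((r + 1).choose (d + 2) : ℤ) + (r.choose (d + 2) : ℤ) -
          ((r1 + r2).choose (d + 2) : ℤ) - ((r1 + r3).choose (d + 2) : ℤ) -
          ((r2 + r3 + 1).choose (d + 2) : ℤ)}
      (((r + 1).choose (d + 2) : ℤ) + (r.choose (d + 2) : ℤ) -
        (((2 * r + 1) / 3).choose (d + 2) : ℤ) -
        (((round ((2 * (r : ℚ) + 1) / 3)).toNat.choose (d + 2) : ℤ)) -
        ((((2 * r + 1 + 2) / 3).choose (d + 2) : ℤ))) := by
  rw [show 2 * (r : ℚ) + 1 = ((2 * r + 1 : ℕ) : ℚ) by push_cast; ring, toNat_round_div_three]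
  constructor
  · obtain ⟨r1, r2, r3, hr, h12, h13, h23⟩ := exists_pairwise_sums_balanced r
    exact ⟨r1, r2, r3, hr, by rw [h12, h13, h23]⟩
  · rintro n ⟨r1, r2, r3, hr, rfl⟩
    have := balanced_sum_le_of_monotone_fwdDiff (monotone_fwdDiff_choose (d + 1))
      (show (r1 + r2) + (r1 + r3) + (r2 + r3 + 1) = 2 * r + 1 by omega)
    linarith

/-- For `r ≥ 1` and `0 ≤ d ≤ r-1`, the maximum over nonnegative `r₁+r₂+r₃ = r` of
`C(r+1,d+2) + C(r,d+2) − C(r₁+r₂,d+2) − C(r₁+r₃,d+2) − C(r₂+r₃+1,d+2)` equals the value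
obtained from the balanced decomposition `⌊(2r+1)/3⌋, [(2r+1)/3], ⌈(2r+1)/3⌉` of `2r+1`,
where `[x]` is the nearest integer to `x`. -/
theorem stmt9 (r d : ℕ) (hr : 1 ≤ r) (hd : d ≤ r - 1) :
    IsGreatest
      {n : ℤ | ∃ r1 r2 r3 : ℕ, r1 + r2 + r3 = r ∧
        n = ((r + 1).choose (d + 2) : ℤ) + (r.choose (d + 2) : ℤ) -
          ((r1 + r2).choose (d + 2) : ℤ) - ((r1 + r3).choose (d + 2) : ℤ) -
          ((r2 + r3 + 1).choose (d + 2) : ℤ)}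
      (((r + 1).choose (d + 2) : ℤ) + (r.choose (d + 2) : ℤ) -
        (((2 * r + 1) / 3).choose (d + 2) : ℤ) -
        (((round ((2 * (r : ℚ) + 1) / 3)).toNat.choose (d + 2) : ℤ)) -
        ((((2 * r + 1 + 2) / 3).choose (d + 2) : ℤ))) :=
  stmt9_general r d
end

section
/- For integers d ≥ 1 and r > d, any real solution z ∈ [d, r−2] of the equation (z+1−ε)(z+1+ε)(C(r−2,d) − C(z,d)) = (z−ε)(z+ε)(C(r−2,d) − C(z−1,d)) (with ε ∈ {0,1} and C(z,d) = z(z−1)⋯(z−d+1)/d! extended to real z) satisfies L(d;r) < z, where L(d;r) = (2/(d+2))^{1/d}(r−2) + (1 − (2/(d+2))^{1/d})(d−1)/2. -/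
/-!
Clearing the denominator `d!` and writing `∏ (z - i) = z Q`, `∏ (z - 1 - i) = (z - d) Q`,
the equation becomes `(2z + 1) ∏ (t - i) = Q ((d + 2) z² + z - d ε²)` with `t = r - 2`, whence
`∏ (t - i) < (d + 2)/2 · ∏ (z - i)`. Pairing the factors `i` and `d - 1 - i` around the centre
`(d - 1)/2` shows that `∏ (x - i) / (x - (d - 1)/2)^d` decreases in `x`, so
`((t - (d - 1)/2) / (z - (d - 1)/2))^d < (d + 2)/2`, which is the claim after taking `d`-th roots.
-/

open Finset

/-- The polynomial extension of the binomial coefficient to real arguments: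
`C(t, d) = t(t−1)⋯(t−d+1)/d!`. -/
noncomputable def realChoose (d : ℕ) (t : ℝ) : ℝ :=
  (∏ i ∈ Finset.range d, (t - i)) / (Nat.factorial d)

lemma pow_sub_center_mul_prod_le {d : ℕ} {x y : ℝ} (hx : (d : ℝ) - 1 < x) (hxy : x ≤ y) :
    (y - ((d : ℝ) - 1) / 2) ^ d * ∏ i ∈ range d, (x - i)
      ≤ (x - ((d : ℝ) - 1) / 2) ^ d * ∏ i ∈ range d, (y - i) := by
  rcases Nat.eq_zero_or_pos d with rfl | hd
  · simp
  have hd1 : (1 : ℝ) ≤ d := by exact_mod_cast hd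
  set s : ℝ := ((d : ℝ) - 1) / 2
  have hfac : ∀ u : ℝ, (d : ℝ) - 1 < u → ∀ i ∈ range d, 0 < u - i := by
    intro u hu i hi
    have : (i : ℝ) ≤ d - 1 := by
      have := mem_range.mp hi
      rw [le_sub_iff_add_le]; exact_mod_cast this
    linarith
  have hxs : 0 < x - s := by simp only [s]; linarith
  have hys : x - s ≤ y - s := by linarith
  have hpaired : ∀ u v : ℝ, (v - s) ^ d * ∏ i ∈ range d, (u - i) =
      ∏ i ∈ range d, ((v - s) * (u - i)) := fun u v => by
    rw [prod_mul_distrib, prod_const, card_range]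
  have hreflect : ∀ i ∈ range d, ((d - 1 - i : ℕ) : ℝ) = 2 * s - i := by
    intro i hi
    have := mem_range.mp hi
    rw [Nat.cast_sub (by omega), Nat.cast_sub (by omega)]
    simp only [s]; push_cast; ring
  refine (pow_le_pow_iff_left₀
    (mul_nonneg (pow_nonneg (hxs.trans_le hys).le _) (prod_pos (hfac x hx)).le)
    (mul_nonneg (pow_nonneg hxs.le _) (prod_pos (hfac y (hx.trans_le hxy))).le) two_ne_zero).mp ?_
  rw [hpaired, hpaired, sq, sq]
  nth_rewrite 2 [← prod_range_reflect]
  nth_rewrite 4 [← prod_range_reflect]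
  rw [← prod_mul_distrib, ← prod_mul_distrib]
  refine prod_le_prod (fun i hi => ?_) (fun i hi => ?_)
  · have hy : 0 < y - s := hxs.trans_le hys
    have hi' := hfac x hx (d - 1 - i) (mem_range.mpr (by have := mem_range.mp hi; omega))
    exact mul_nonneg (mul_pos hy (hfac x hx i hi)).le (mul_pos hy hi').le
  · -- with `a = s - i` the paired factors are `(u - s)² - a²`
    rw [hreflect i hi]
    nlinarith [mul_le_mul_of_nonneg_right (pow_le_pow_left₀ hxs.le hys 2) (sq_nonneg (s - i))]

lemma prod_range_succ_sub_eq (e : ℕ) (z : ℝ) :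
    ∏ i ∈ range (e + 1), (z - i) = z * ∏ i ∈ range e, (z - 1 - i) := by
  rw [prod_range_succ']
  push_cast
  simp only [sub_add_eq_sub_sub_swap, sub_zero]
  ring

lemma mul_prod_eq_of_first_difference_eq {e : ℕ} {t z ε : ℝ}
    (heq : (z + 1 - ε) * (z + 1 + ε) * (realChoose (e + 1) t - realChoose (e + 1) z)
      = (z - ε) * (z + ε) * (realChoose (e + 1) t - realChoose (e + 1) (z - 1))) :
    (2 * z + 1) * ∏ i ∈ range (e + 1), (t - i)
      = (∏ i ∈ range e, (z - 1 - i)) * (((e : ℝ) + 3) * z ^ 2 + z - ((e : ℝ) + 1) * ε ^ 2) := by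
  simp only [realChoose, prod_range_succ_sub_eq e z, prod_range_succ (fun i : ℕ => z - 1 - i)]
    at heq
  field_simp at heq
  linear_combination heq

lemma prod_lt_of_first_difference_eq {d : ℕ} (hd : 1 ≤ d) {t z ε : ℝ}
    (hz : (d : ℝ) - 1 < z)
    (heq : (z + 1 - ε) * (z + 1 + ε) * (realChoose d t - realChoose d z)
      = (z - ε) * (z + ε) * (realChoose d t - realChoose d (z - 1))) :
    ∏ i ∈ range d, (t - i) < ((d : ℝ) + 2) / 2 * ∏ i ∈ range d, (z - i) := by
  obtain ⟨e, rfl⟩ : ∃ e, d = e + 1 := ⟨d - 1, by omega⟩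
  push_cast at hz ⊢
  have hQ : 0 < ∏ i ∈ range e, (z - 1 - i) := prod_pos fun i hi => by
    have : (i : ℝ) + 1 ≤ e := by exact_mod_cast mem_range.mp hi
    linarith
  have hz0 : 0 < z := by linarith [(Nat.cast_nonneg e : (0 : ℝ) ≤ e)]
  have hcoef : ((e : ℝ) + 3) * z ^ 2 + z - ((e : ℝ) + 1) * ε ^ 2
      < ((e : ℝ) + 3) / 2 * (z * (2 * z + 1)) := by
    nlinarith [sq_nonneg ε, (Nat.cast_nonneg e : (0 : ℝ) ≤ e)]
  refine lt_of_mul_lt_mul_left ?_ (by linarith : (0 : ℝ) ≤ 2 * z + 1)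
  calc _ = _ := mul_prod_eq_of_first_difference_eq heq
    _ < (∏ i ∈ range e, (z - 1 - i)) * (((e : ℝ) + 3) / 2 * (z * (2 * z + 1))) :=
        mul_lt_mul_of_pos_left hcoef hQ
    _ = _ := by rw [prod_range_succ_sub_eq]; ring

lemma rpow_inv_mul_lt_of_pow_lt_mul_pow {d : ℕ} (hd : d ≠ 0) {a b c : ℝ} (hb : 0 ≤ b)
    (hc : 0 < c) (h : a ^ d < c * b ^ d) : c⁻¹ ^ ((1 : ℝ) / d) * a < b := by
  refine lt_of_pow_lt_pow_left₀ d hb ?_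
  rw [mul_pow, one_div, Real.rpow_inv_natCast_pow (inv_nonneg.mpr hc.le) hd]
  rwa [inv_mul_lt_iff₀ hc]

theorem stmt19_general (d r : ℕ) (hd : 1 ≤ d) (ε : ℝ)
    (z : ℝ) (hz1 : (d : ℝ) ≤ z) (hz2 : z ≤ (r : ℝ) - 2)
    (heq : (z + 1 - ε) * (z + 1 + ε) * (realChoose d ((r : ℝ) - 2) - realChoose d z)
      = (z - ε) * (z + ε) * (realChoose d ((r : ℝ) - 2) - realChoose d (z - 1))) :
    (2 / ((d : ℝ) + 2)) ^ ((1 : ℝ) / (d : ℝ)) * ((r : ℝ) - 2) +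
        (1 - (2 / ((d : ℝ) + 2)) ^ ((1 : ℝ) / (d : ℝ))) * ((d : ℝ) - 1) / 2 < z := by
  have hz : (d : ℝ) - 1 < z := by linarith
  have hd1 : (1 : ℝ) ≤ d := by exact_mod_cast hd
  have hprod : 0 < ∏ i ∈ range d, (z - i) := prod_pos fun i hi => by
    have : (i : ℝ) + 1 ≤ d := by exact_mod_cast mem_range.mp hi
    linarith
  have hpow : ((r : ℝ) - 2 - ((d : ℝ) - 1) / 2) ^ d
      < ((d : ℝ) + 2) / 2 * (z - ((d : ℝ) - 1) / 2) ^ d := by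
    refine lt_of_mul_lt_mul_right ?_ hprod.le
    calc _ ≤ (z - ((d : ℝ) - 1) / 2) ^ d * ∏ i ∈ range d, ((r : ℝ) - 2 - i) :=
          pow_sub_center_mul_prod_le hz hz2
      _ < (z - ((d : ℝ) - 1) / 2) ^ d * (((d : ℝ) + 2) / 2 * ∏ i ∈ range d, (z - i)) :=
          mul_lt_mul_of_pos_left (prod_lt_of_first_difference_eq hd hz heq)
            (pow_pos (by linarith) _)
      _ = _ := by ring
  have hroot := rpow_inv_mul_lt_of_pow_lt_mul_pow (by omega) (by linarith) (by positivity) hpow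
  rw [inv_div] at hroot
  linear_combination hroot

/-- For `d ≥ 1` and `r > d`, any real solution `z ∈ [d, r−2]` of the
first-difference equation
`(z+1−ε)(z+1+ε)(C(r−2,d) − C(z,d)) = (z−ε)(z+ε)(C(r−2,d) − C(z−1,d))`
(with `ε ∈ {0,1}`) satisfies `z > L(d;r)`, where
`L(d;r) = (2/(d+2))^{1/d}(r−2) + (1 − (2/(d+2))^{1/d})(d−1)/2`. -/
theorem stmt19 (d r : ℕ) (hd : 1 ≤ d) (hr : d < r) (ε : ℝ) (hε : ε = 0 ∨ ε = 1)
    (z : ℝ) (hz1 : (d : ℝ) ≤ z) (hz2 : z ≤ (r : ℝ) - 2)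
    (heq : (z + 1 - ε) * (z + 1 + ε) * (realChoose d ((r : ℝ) - 2) - realChoose d z)
      = (z - ε) * (z + ε) * (realChoose d ((r : ℝ) - 2) - realChoose d (z - 1))) :
    (2 / ((d : ℝ) + 2)) ^ ((1 : ℝ) / (d : ℝ)) * ((r : ℝ) - 2) +
        (1 - (2 / ((d : ℝ) + 2)) ^ ((1 : ℝ) / (d : ℝ))) * ((d : ℝ) - 1) / 2 < z :=
  stmt19_general d r hd ε z hz1 hz2 heq
end
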